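/- arXiv:2309.17401 — 3 statements merged into one kernel-verified Lean document; each statement's English description precedes it below -/
import Mathlib

section
/- Data processing inequality: Let A, B, C be finite nonempty types and let p be a strictly positive joint probability mass function on A × B × C such that A → B → C forms a Markov chain. Then I(A;C) ≤ I(A;B). -/
open scoped BigOperators

noncomputable section

namespace AdvLatent

variable {A B C : Type*} [Fintype A] [Fintype B] [Fintype C]

/-- Marginal of a joint pmf on the first two coordinates. -/
def m12 (p : A → B → C → ℝ) (a : A) (b : B) : ℝ := ∑ c, p a b c

/-- Marginal of a joint pmf on the first and third coordinates. -/
def m13 (p : A → B → C → ℝ) (a : A) (c : C) : ℝ := ∑ b, p a b c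

/-- Marginal of a joint pmf on the last two coordinates. -/
def m23 (p : A → B → C → ℝ) (b : B) (c : C) : ℝ := ∑ a, p a b c

/-- Marginal of a joint pmf on the first coordinate. -/
def m1 (p : A → B → C → ℝ) (a : A) : ℝ := ∑ b, ∑ c, p a b c

/-- Marginal of a joint pmf on the second coordinate. -/
def m2 (p : A → B → C → ℝ) (b : B) : ℝ := ∑ a, ∑ c, p a b c

/-- Marginal of a joint pmf on the third coordinate. -/
def m3 (p : A → B → C → ℝ) (c : C) : ℝ := ∑ a, ∑ b, p a b c

/-- Mutual information between the first and second coordinates: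
`I(1;2) = ∑ p₁₂(a,b) log (p₁₂(a,b) / (p₁(a) p₂(b)))`. -/
def mi12 (p : A → B → C → ℝ) : ℝ :=
  ∑ a, ∑ b, m12 p a b * Real.log (m12 p a b / (m1 p a * m2 p b))

/-- Mutual information between the first and third coordinates. -/
def mi13 (p : A → B → C → ℝ) : ℝ :=
  ∑ a, ∑ c, m13 p a c * Real.log (m13 p a c / (m1 p a * m3 p c))

/-- Mutual information between the second and third coordinates. -/
def mi23 (p : A → B → C → ℝ) : ℝ :=
  ∑ b, ∑ c, m23 p b c * Real.log (m23 p b c / (m2 p b * m3 p c))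

/-- Conditional mutual information between the first and second coordinates
given the third: `I(1;2|3) = ∑ p(a,b,c) log (p₃(c) p(a,b,c) / (p₁₃(a,c) p₂₃(b,c)))`. -/
def cmi12g3 (p : A → B → C → ℝ) : ℝ :=
  ∑ a, ∑ b, ∑ c, p a b c *
    Real.log (m3 p c * p a b c / (m13 p a c * m23 p b c))

/-- Mutual information between the pair (first, third) coordinates, regarded as a
single random variable, and the second coordinate. -/
def miPair13_2 (p : A → B → C → ℝ) : ℝ :=
  ∑ a, ∑ c, ∑ b, p a b c * Real.log (p a b c / (m13 p a c * m2 p b))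

end AdvLatent

open AdvLatent

/-- **Data processing inequality.** For a strictly positive joint pmf `p` on `A × B × C`
(finite nonempty types) such that `A → B → C` is a Markov chain (i.e. `A` and `C` are
conditionally independent given `B`), `I(A;C) ≤ I(A;B)`. -/
theorem data_processing_inequality
    {A B C : Type*} [Fintype A] [Fintype B] [Fintype C]
    [Nonempty A] [Nonempty B] [Nonempty C]
    (p : A → B → C → ℝ)
    (hpos : ∀ a b c, 0 < p a b c)
    (hsum : ∑ a, ∑ b, ∑ c, p a b c = 1)
    (hmarkov : ∀ a b c, p a b c * m2 p b = m12 p a b * m23 p b c) :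
    mi13 p ≤ mi12 p := by
  classical
  -- positivity of marginals
  have h12 : ∀ a b, 0 < m12 p a b := fun a b =>
    Finset.sum_pos (fun c _ => hpos a b c) Finset.univ_nonempty
  have h13 : ∀ a c, 0 < m13 p a c := fun a c =>
    Finset.sum_pos (fun b _ => hpos a b c) Finset.univ_nonempty
  have h23 : ∀ b c, 0 < m23 p b c := fun b c =>
    Finset.sum_pos (fun a _ => hpos a b c) Finset.univ_nonempty
  have h1 : ∀ a, 0 < m1 p a := fun a =>
    Finset.sum_pos (fun b _ => Finset.sum_pos (fun c _ => hpos a b c) Finset.univ_nonempty)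
      Finset.univ_nonempty
  have h2 : ∀ b, 0 < m2 p b := fun b =>
    Finset.sum_pos (fun a _ => Finset.sum_pos (fun c _ => hpos a b c) Finset.univ_nonempty)
      Finset.univ_nonempty
  have h3 : ∀ c, 0 < m3 p c := fun c =>
    Finset.sum_pos (fun a _ => Finset.sum_pos (fun b _ => hpos a b c) Finset.univ_nonempty)
      Finset.univ_nonempty
  -- expand mi12 as triple sum
  have e12 : mi12 p = ∑ a, ∑ b, ∑ c, p a b c * Real.log (m12 p a b / (m1 p a * m2 p b)) := by
    unfold mi12
    refine Finset.sum_congr rfl fun a _ => Finset.sum_congr rfl fun b _ => ?_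
    rw [show m12 p a b * Real.log (m12 p a b / (m1 p a * m2 p b))
        = (∑ c, p a b c) * Real.log (m12 p a b / (m1 p a * m2 p b)) from rfl,
      Finset.sum_mul]
  -- expand mi13 as triple sum in order a,b,c
  have e13 : mi13 p = ∑ a, ∑ b, ∑ c, p a b c * Real.log (m13 p a c / (m1 p a * m3 p c)) := by
    unfold mi13
    refine Finset.sum_congr rfl fun a _ => ?_
    have h : ∀ c, m13 p a c * Real.log (m13 p a c / (m1 p a * m3 p c))
        = ∑ b, p a b c * Real.log (m13 p a c / (m1 p a * m3 p c)) := fun c => by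
      rw [show m13 p a c * Real.log (m13 p a c / (m1 p a * m3 p c))
          = (∑ b, p a b c) * Real.log (m13 p a c / (m1 p a * m3 p c)) from rfl,
        Finset.sum_mul]
    calc ∑ c, m13 p a c * Real.log (m13 p a c / (m1 p a * m3 p c))
        = ∑ c, ∑ b, p a b c * Real.log (m13 p a c / (m1 p a * m3 p c)) :=
          Finset.sum_congr rfl fun c _ => h c
      _ = ∑ b, ∑ c, p a b c * Real.log (m13 p a c / (m1 p a * m3 p c)) := Finset.sum_comm
  -- difference equals conditional mutual information
  have key : mi12 p - mi13 p
      = ∑ a, ∑ b, ∑ c, p a b c * Real.log (m3 p c * p a b c / (m13 p a c * m23 p b c)) := by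
    rw [e12, e13, ← Finset.sum_sub_distrib]
    refine Finset.sum_congr rfl fun a _ => ?_
    rw [← Finset.sum_sub_distrib]
    refine Finset.sum_congr rfl fun b _ => ?_
    rw [← Finset.sum_sub_distrib]
    refine Finset.sum_congr rfl fun c _ => ?_
    rw [← mul_sub]
    congr 1
    have hm12 : m12 p a b = p a b c * m2 p b / m23 p b c := by
      rw [eq_div_iff (h23 b c).ne']
      linarith [hmarkov a b c]
    have h13' := (h13 a c).ne'
    have h23' := (h23 b c).ne'
    have h3' := (h3 c).ne'
    have h1' := (h1 a).ne'
    have h2' := (h2 b).ne'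
    have hp' := (hpos a b c).ne'
    rw [Real.log_div (h12 a b).ne' (mul_ne_zero h1' h2'),
        Real.log_div h13' (mul_ne_zero h1' h3'),
        Real.log_div (mul_ne_zero h3' hp') (mul_ne_zero h13' h23'),
        Real.log_mul h1' h2', Real.log_mul h1' h3',
        Real.log_mul h3' hp', Real.log_mul h13' h23',
        hm12, Real.log_div (mul_ne_zero hp' h2') h23', Real.log_mul hp' h2']
    ring
  -- Gibbs inequality pointwise
  have gibbs : ∀ x y : ℝ, 0 < x → 0 < y → x - y ≤ x * Real.log (x / y) := by
    intro x y hx hy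
    have h := Real.log_le_sub_one_of_pos (div_pos hy hx)
    have h2 : x * Real.log (y / x) ≤ y - x := by
      calc x * Real.log (y / x) ≤ x * (y / x - 1) := mul_le_mul_of_nonneg_left h hx.le
        _ = y - x := by field_simp
    have hlog : Real.log (x / y) = - Real.log (y / x) := by
      rw [Real.log_div hx.ne' hy.ne', Real.log_div hy.ne' hx.ne']; ring
    rw [hlog, mul_neg]
    linarith
  -- the comparison density q = m13 * m23 / m3
  have hqpos : ∀ a b c, 0 < m13 p a c * m23 p b c / m3 p c := fun a b c => by
    have := h13 a c; have := h23 b c; have := h3 c; positivity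
  have hqarg : ∀ a b c, m3 p c * p a b c / (m13 p a c * m23 p b c)
      = p a b c / (m13 p a c * m23 p b c / m3 p c) := by
    intro a b c
    have h13' := (h13 a c).ne'
    have h23' := (h23 b c).ne'
    have h3' := (h3 c).ne'
    field_simp
  -- sum of m3 equals 1
  have hm3sum : ∑ c, m3 p c = 1 := by
    rw [← hsum]
    unfold m3
    calc ∑ c, ∑ a, ∑ b, p a b c = ∑ a, ∑ c, ∑ b, p a b c := Finset.sum_comm
      _ = ∑ a, ∑ b, ∑ c, p a b c := Finset.sum_congr rfl fun a _ => Finset.sum_comm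
  have hsumb23 : ∀ c, ∑ b, m23 p b c = m3 p c := fun c => Finset.sum_comm
  have hsumb13 : ∀ c, ∑ a, m13 p a c = m3 p c := fun c => rfl
  -- sum of q equals 1
  have hsumq : ∑ a, ∑ b, ∑ c, m13 p a c * m23 p b c / m3 p c = 1 := by
    calc ∑ a, ∑ b, ∑ c, m13 p a c * m23 p b c / m3 p c
        = ∑ a, ∑ c, ∑ b, m13 p a c * m23 p b c / m3 p c :=
          Finset.sum_congr rfl fun a _ => Finset.sum_comm
      _ = ∑ c, ∑ a, ∑ b, m13 p a c * m23 p b c / m3 p c := Finset.sum_comm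
      _ = ∑ c, ∑ a, m13 p a c := by
          refine Finset.sum_congr rfl fun c _ => Finset.sum_congr rfl fun a _ => ?_
          rw [← Finset.sum_div, ← Finset.mul_sum, hsumb23 c, mul_div_assoc,
            div_self (h3 c).ne', mul_one]
      _ = ∑ c, m3 p c := Finset.sum_congr rfl fun c _ => hsumb13 c
      _ = 1 := hm3sum
  -- nonnegativity of the CMI
  have hnn : 0 ≤ ∑ a, ∑ b, ∑ c,
      p a b c * Real.log (m3 p c * p a b c / (m13 p a c * m23 p b c)) := by
    have hle : ∑ a, ∑ b, ∑ c, (p a b c - m13 p a c * m23 p b c / m3 p c)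
        ≤ ∑ a, ∑ b, ∑ c, p a b c * Real.log (m3 p c * p a b c / (m13 p a c * m23 p b c)) := by
      refine Finset.sum_le_sum fun a _ => Finset.sum_le_sum fun b _ =>
        Finset.sum_le_sum fun c _ => ?_
      rw [hqarg a b c]
      exact gibbs _ _ (hpos a b c) (hqpos a b c)
    have hzero : ∑ a, ∑ b, ∑ c, (p a b c - m13 p a c * m23 p b c / m3 p c) = 0 := by
      simp only [Finset.sum_sub_distrib]
      rw [hsum, hsumq]; ring
    linarith
  linarith [key, hnn]
end
end

section
/- Information distortion (Lemma 2): Let Y, X, T be finite nonempty types and let p be a strictly positive joint probability mass function on X × Y × T such that Y → X → T forms a Markov chain. Then the expected Kullback–Leibler divergence between the conditional distributions P(Y|X) and P(Y|T), namely ∑_{x,t} p_{X,T}(x,t) · ∑_y (p_{X,Y}(x,y)/p_X(x)) · log( (p_{X,Y}(x,y)/p_X(x)) / (p_{Y,T}(y,t)/p_T(t)) ), equals the conditional mutual information I(X;Y|T). -/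
open scoped BigOperators

noncomputable section

open AdvLatent

/-!
The Markov property factorizes `p(x,y,t) = p(x,y) p(x,t) / p(x)`. Hence the weight
`p(x,t) p(y|x)` of the divergence is `p(x,y,t)`, and the ratio `p(y|x) / p(y|t)` is
`p(t) p(x,y,t) / (p(x,t) p(y,t))`, so after exchanging the sums over `t` and `y` the two
sides agree term by term.
-/

namespace AdvLatent

variable {A B C : Type*} {p : A → B → C → ℝ} {a : A} {b : B} {c : C}

theorem m12_pos_of_pos [Fintype C] (hp : ∀ a b c, 0 ≤ p a b c) (h : 0 < p a b c) :
    0 < m12 p a b :=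
  Finset.sum_pos' (fun c _ => hp a b c) ⟨c, Finset.mem_univ c, h⟩

theorem m13_pos_of_pos [Fintype B] (hp : ∀ a b c, 0 ≤ p a b c) (h : 0 < p a b c) :
    0 < m13 p a c :=
  Finset.sum_pos' (fun b _ => hp a b c) ⟨b, Finset.mem_univ b, h⟩

theorem m1_pos_of_pos [Fintype B] [Fintype C] (hp : ∀ a b c, 0 ≤ p a b c) (h : 0 < p a b c) :
    0 < m1 p a :=
  Finset.sum_pos' (fun b _ => Finset.sum_nonneg fun c _ => hp a b c)
    ⟨b, Finset.mem_univ b, m12_pos_of_pos hp h⟩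

theorem m13_mul_kl_summand_eq_of_markov [Fintype A] [Fintype B] [Fintype C]
    (hmarkov : p a b c * m1 p a = m12 p a b * m13 p a c)
    (h1 : m1 p a ≠ 0) (h13 : m13 p a c ≠ 0) :
    m13 p a c * (m12 p a b / m1 p a *
        Real.log ((m12 p a b / m1 p a) / (m23 p b c / m3 p c)))
      = p a b c * Real.log (m3 p c * p a b c / (m13 p a c * m23 p b c)) := by
  have hp : p a b c = m12 p a b * m13 p a c / m1 p a := eq_div_of_mul_eq h1 hmarkov
  rw [← mul_assoc]
  congr 2 <;> rw [hp] <;> field_simp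

end AdvLatent

theorem information_distortion_general
    {X Y T : Type*} [Fintype X] [Fintype Y] [Fintype T]
    (p : X → Y → T → ℝ)
    (hpos : ∀ x y t, 0 < p x y t)
    (hmarkov : ∀ x y t, p x y t * m1 p x = m12 p x y * m13 p x t) :
    (∑ x, ∑ t, m13 p x t *
        ∑ y, (m12 p x y / m1 p x) *
          Real.log ((m12 p x y / m1 p x) / (m23 p y t / m3 p t)))
      = cmi12g3 p := by
  have hnonneg : ∀ x y t, 0 ≤ p x y t := fun x y t => (hpos x y t).le
  rw [cmi12g3]
  refine Finset.sum_congr rfl fun x _ => ?_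
  simp_rw [Finset.mul_sum]
  rw [Finset.sum_comm]
  refine Finset.sum_congr rfl fun y _ => Finset.sum_congr rfl fun t _ => ?_
  exact m13_mul_kl_summand_eq_of_markov (hmarkov x y t)
    (m1_pos_of_pos hnonneg (hpos x y t)).ne' (m13_pos_of_pos hnonneg (hpos x y t)).ne'

/-- **Information distortion.** For a strictly positive joint pmf `p` on `X × Y × T`
(finite nonempty types) such that `Y → X → T` is a Markov chain, the expected
Kullback–Leibler divergence between the conditional distributions `P(Y|X)` and `P(Y|T)`
equals the conditional mutual information `I(X;Y|T)`. -/
theorem information_distortion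
    {X Y T : Type*} [Fintype X] [Fintype Y] [Fintype T]
    [Nonempty X] [Nonempty Y] [Nonempty T]
    (p : X → Y → T → ℝ)
    (hpos : ∀ x y t, 0 < p x y t)
    (hsum : ∑ x, ∑ y, ∑ t, p x y t = 1)
    (hmarkov : ∀ x y t, p x y t * m1 p x = m12 p x y * m13 p x t) :
    (∑ x, ∑ t, m13 p x t *
        ∑ y, (m12 p x y / m1 p x) *
          Real.log ((m12 p x y / m1 p x) / (m23 p y t / m3 p t)))
      = cmi12g3 p :=
  information_distortion_general p hpos hmarkov
end
end

section
/- Input versus latent robustness (Theorem 2): Let Y, X, X_adv, T', T_adv be finite nonempty types. Let q be a strictly positive joint probability mass function on Y × X × X_adv such that Y → X → X_adv forms a Markov chain. Let q' be a strictly positive joint pmf on Y × X_adv × T' whose (Y, X_adv)-marginal agrees with that of q and such that Y → X_adv → T' forms a Markov chain; let r be a strictly positive joint pmf on Y × X × T_adv whose (Y, X)-marginal agrees with that of q and such that Y → X → T_adv forms a Markov chain. If the two distortions are equal, i.e., I_{q'}(X_adv;Y) − I_{q'}(Y;T') = I_r(X;Y) − I_r(Y;T_adv), then I_{q'}(Y;T')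 ≤ I_r(Y;T_adv). That is, with the same level of information distortion, perturbing the input (producing latent T') is at least as damaging to I(Y;·) as directly perturbing the latent representation (producing T_adv). -/
open scoped BigOperators

noncomputable section

open AdvLatent

/-!
Under the Markov chain `Y → X → Xadv`, both `I_q(Y;X)` and `I_q(Y;Xadv)` are expectations
under `q`, and their difference is `∑ q log (s / q)` with `s = q₁₃ q₂₃ / q₃`, a function of the
same total mass as `q`; since `log t ≤ t - 1`, this is `≤ 0`, which is the data processing
inequality `I_q(Y;Xadv) ≤ I_q(Y;X)`. The marginal constraints identify `I_{q'}(Y;Xadv)` with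
`I_q(Y;Xadv)` and `I_r(Y;X)` with `I_q(Y;X)`, so equal distortions give
`I_r(Y;Tadv) - I_{q'}(Y;T') = I_q(Y;X) - I_q(Y;Xadv) ≥ 0`.
-/

namespace AdvLatent

open Finset Real

lemma mul_log_div_le_sub {x y : ℝ} (hx : 0 < x) (hy : 0 < y) : x * log (y / x) ≤ y - x :=
  calc x * log (y / x) ≤ x * (y / x - 1) :=
        mul_le_mul_of_nonneg_left (log_le_sub_one_of_pos (div_pos hy hx)) hx.le
    _ = y - x := by field_simp

variable {A B C D : Type*}

lemma m1_eq_sum_m12 [Fintype B] [Fintype C] (p : A → B → C → ℝ) (a : A) :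
    m1 p a = ∑ b, m12 p a b := rfl

lemma m2_eq_sum_m12 [Fintype A] [Fintype C] (p : A → B → C → ℝ) (b : B) :
    m2 p b = ∑ a, m12 p a b := rfl

lemma m1_eq_sum_m13 [Fintype B] [Fintype C] (p : A → B → C → ℝ) (a : A) :
    m1 p a = ∑ c, m13 p a c := sum_comm

lemma m3_eq_sum_m13 [Fintype A] [Fintype B] (p : A → B → C → ℝ) (c : C) :
    m3 p c = ∑ a, m13 p a c := rfl

lemma m3_eq_sum_m23 [Fintype A] [Fintype B] (p : A → B → C → ℝ) (c : C) :
    m3 p c = ∑ b, m23 p b c := sum_comm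

lemma mi12_congr [Fintype A] [Fintype B] [Fintype C] [Fintype D]
    {p : A → B → C → ℝ} {p' : A → B → D → ℝ}
    (h : ∀ a b, m12 p a b = m12 p' a b) : mi12 p = mi12 p' := by
  have h1 : ∀ a, m1 p a = m1 p' a := fun a => by simp only [m1_eq_sum_m12, h]
  have h2 : ∀ b, m2 p b = m2 p' b := fun b => by simp only [m2_eq_sum_m12, h]
  simp only [mi12, h, h1, h2]

lemma mi12_eq_mi13 [Fintype A] [Fintype B] [Fintype C] [Fintype D]
    {p' : A → C → D → ℝ} {p : A → B → C → ℝ}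
    (h : ∀ a c, m12 p' a c = m13 p a c) : mi12 p' = mi13 p := by
  have h1 : ∀ a, m1 p' a = m1 p a := fun a => by
    rw [m1_eq_sum_m12, m1_eq_sum_m13]; simp only [h]
  have h2 : ∀ c, m2 p' c = m3 p c := fun c => by simp only [m2_eq_sum_m12, m3_eq_sum_m13, h]
  simp only [mi12, mi13, h, h1, h2]

lemma mi12_eq_sum_mul_log [Fintype A] [Fintype B] [Fintype C] (p : A → B → C → ℝ) :
    mi12 p = ∑ a, ∑ b, ∑ c, p a b c * log (m12 p a b / (m1 p a * m2 p b)) :=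
  sum_congr rfl fun _ _ => sum_congr rfl fun _ _ => sum_mul ..

lemma mi13_eq_sum_mul_log [Fintype A] [Fintype B] [Fintype C] (p : A → B → C → ℝ) :
    mi13 p = ∑ a, ∑ b, ∑ c, p a b c * log (m13 p a c / (m1 p a * m3 p c)) :=
  sum_congr rfl fun _ _ => (sum_congr rfl fun _ _ => sum_mul ..).trans sum_comm

section Positive

variable {p : A → B → C → ℝ}

lemma m12_pos [Fintype C] [Nonempty C] (hp : ∀ a b c, 0 < p a b c) (a : A) (b : B) :
    0 < m12 p a b :=
  sum_pos (fun c _ => hp a b c) univ_nonempty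

lemma m13_pos [Fintype B] [Nonempty B] (hp : ∀ a b c, 0 < p a b c) (a : A) (c : C) :
    0 < m13 p a c :=
  sum_pos (fun b _ => hp a b c) univ_nonempty

lemma m23_pos [Fintype A] [Nonempty A] (hp : ∀ a b c, 0 < p a b c) (b : B) (c : C) :
    0 < m23 p b c :=
  sum_pos (fun a _ => hp a b c) univ_nonempty

lemma m1_pos [Fintype B] [Fintype C] [Nonempty B] [Nonempty C] (hp : ∀ a b c, 0 < p a b c)
    (a : A) : 0 < m1 p a :=
  sum_pos (fun b _ => m12_pos hp a b) univ_nonempty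

lemma m2_pos [Fintype A] [Fintype C] [Nonempty A] [Nonempty C] (hp : ∀ a b c, 0 < p a b c)
    (b : B) : 0 < m2 p b :=
  sum_pos (fun a _ => m12_pos hp a b) univ_nonempty

lemma m3_pos [Fintype A] [Fintype B] [Nonempty A] [Nonempty B] (hp : ∀ a b c, 0 < p a b c)
    (c : C) : 0 < m3 p c :=
  sum_pos (fun a _ => m13_pos hp a c) univ_nonempty

lemma sum_m13_mul_m23_div_m3 [Fintype A] [Fintype B] (hp : ∀ a b c, 0 < p a b c)
    (a : A) (c : C) :
    ∑ b, m13 p a c * m23 p b c / m3 p c = m13 p a c := by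
  rcases isEmpty_or_nonempty B with hB | hB
  · simp [m13]
  have : Nonempty A := ⟨a⟩
  rw [← sum_div, ← mul_sum, ← m3_eq_sum_m23, mul_div_cancel_right₀ _ (m3_pos hp c).ne']

variable [Fintype A] [Fintype B] [Fintype C]

lemma log_m13_div_eq_of_markov (hp : ∀ a b c, 0 < p a b c)
    (hmk : ∀ a b c, p a b c * m2 p b = m12 p a b * m23 p b c) (a : A) (b : B) (c : C) :
    log (m13 p a c / (m1 p a * m3 p c)) =
      log (m12 p a b / (m1 p a * m2 p b)) +
        log (m13 p a c * m23 p b c / m3 p c / p a b c) := by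
  have : Nonempty A := ⟨a⟩
  have : Nonempty B := ⟨b⟩
  have : Nonempty C := ⟨c⟩
  have h12 := m12_pos hp a b
  have h13 := m13_pos hp a c
  have h23 := m23_pos hp b c
  have h1 := m1_pos hp a
  have h2 := m2_pos hp b
  have h3 := m3_pos hp c
  have h := hp a b c
  rw [← log_mul (by positivity) (by positivity)]
  congr 1
  field_simp
  linear_combination hmk a b c

theorem mi13_le_mi12_of_markov (hp : ∀ a b c, 0 < p a b c)
    (hmk : ∀ a b c, p a b c * m2 p b = m12 p a b * m23 p b c) : mi13 p ≤ mi12 p := by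
  set s : A → B → C → ℝ := fun a b c => m13 p a c * m23 p b c / m3 p c
  have hs_pos : ∀ a b c, 0 < s a b c := fun a b c => by
    have : Nonempty A := ⟨a⟩
    have : Nonempty B := ⟨b⟩
    exact div_pos (mul_pos (m13_pos hp a c) (m23_pos hp b c)) (m3_pos hp c)
  have hs_mass : ∑ a, ∑ b, ∑ c, (s a b c - p a b c) = 0 := by
    refine sum_eq_zero fun a _ => ?_
    rw [sum_comm]
    refine sum_eq_zero fun c _ => ?_
    rw [sum_sub_distrib, sum_m13_mul_m23_div_m3 hp, m13, sub_self]
  rw [mi13_eq_sum_mul_log, mi12_eq_sum_mul_log, ← sub_nonpos, ← sum_sub_distrib, ← hs_mass]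
  refine sum_le_sum fun a _ => ?_
  rw [← sum_sub_distrib]
  refine sum_le_sum fun b _ => ?_
  rw [← sum_sub_distrib]
  refine sum_le_sum fun c _ => ?_
  rw [log_m13_div_eq_of_markov hp hmk a b c, mul_add, add_sub_cancel_left]
  exact mul_log_div_le_sub (hp a b c) (hs_pos a b c)

end Positive

end AdvLatent

theorem input_vs_latent_robustness_general
    {Y X Xadv T' Tadv : Type*}
    [Fintype Y] [Fintype X] [Fintype Xadv] [Fintype T'] [Fintype Tadv]
    (q : Y → X → Xadv → ℝ)
    (q' : Y → Xadv → T' → ℝ)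
    (r : Y → X → Tadv → ℝ)
    (hq_pos : ∀ y x xa, 0 < q y x xa)
    (hq_markov : ∀ y x xa, q y x xa * m2 q x = m12 q y x * m23 q x xa)
    (hq'_marg : ∀ y xa, m12 q' y xa = m13 q y xa)
    (hr_marg : ∀ y x, m12 r y x = m12 q y x)
    (hdistortion : mi12 q' - mi13 q' = mi12 r - mi13 r) :
    mi13 q' ≤ mi13 r := by
  have hdpi : mi13 q ≤ mi12 q := mi13_le_mi12_of_markov hq_pos hq_markov
  rw [mi12_eq_mi13 hq'_marg, mi12_congr hr_marg] at hdistortion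
  linarith

/-- **Input versus latent robustness.** Let `q` be a strictly positive joint pmf on
`Y × X × Xadv` forming a Markov chain `Y → X → Xadv`; let `q'` be a strictly positive
joint pmf on `Y × Xadv × T'` whose `(Y, Xadv)`-marginal agrees with that of `q`, forming
a Markov chain `Y → Xadv → T'`; and let `r` be a strictly positive joint pmf on
`Y × X × Tadv` whose `(Y, X)`-marginal agrees with that of `q`, forming a Markov chain
`Y → X → Tadv`. If the two distortions agree, i.e.
`I_{q'}(Xadv;Y) − I_{q'}(Y;T') = I_r(X;Y) − I_r(Y;Tadv)`, then
`I_{q'}(Y;T') ≤ I_r(Y;Tadv)`. -/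
theorem input_vs_latent_robustness
    {Y X Xadv T' Tadv : Type*}
    [Fintype Y] [Fintype X] [Fintype Xadv] [Fintype T'] [Fintype Tadv]
    [Nonempty Y] [Nonempty X] [Nonempty Xadv] [Nonempty T'] [Nonempty Tadv]
    (q : Y → X → Xadv → ℝ)
    (q' : Y → Xadv → T' → ℝ)
    (r : Y → X → Tadv → ℝ)
    (hq_pos : ∀ y x xa, 0 < q y x xa)
    (hq_sum : ∑ y, ∑ x, ∑ xa, q y x xa = 1)
    (hq_markov : ∀ y x xa, q y x xa * m2 q x = m12 q y x * m23 q x xa)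
    (hq'_pos : ∀ y xa t, 0 < q' y xa t)
    (hq'_sum : ∑ y, ∑ xa, ∑ t, q' y xa t = 1)
    (hq'_markov : ∀ y xa t, q' y xa t * m2 q' xa = m12 q' y xa * m23 q' xa t)
    (hq'_marg : ∀ y xa, m12 q' y xa = m13 q y xa)
    (hr_pos : ∀ y x t, 0 < r y x t)
    (hr_sum : ∑ y, ∑ x, ∑ t, r y x t = 1)
    (hr_markov : ∀ y x t, r y x t * m2 r x = m12 r y x * m23 r x t)
    (hr_marg : ∀ y x, m12 r y x = m12 q y x)
    (hdistortion : mi12 q' - mi13 q' = mi12 r - mi13 r) :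
    mi13 q' ≤ mi13 r :=
  input_vs_latent_robustness_general q q' r hq_pos hq_markov hq'_marg hr_marg hdistortion
end
end
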